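/- arXiv:math/0404470 — 3 statements merged into one kernel-verified Lean document; each statement's English description precedes it below -/
import Mathlib

section
/- If M and N are nearly free ℤ-modules, then the tensor product M ⊗_ℤ N is nearly free. -/
open scoped TensorProduct

/-- A ℤ-module `M` is *nearly free* if every countable submodule is free. -/
def NearlyFree (M : Type*) [AddCommGroup M] [Module ℤ M] : Prop :=
  ∀ N : Submodule ℤ M, Countable N → Module.Free ℤ N

/-!
A countable submodule `P` of `M ⊗ N` lies in the image of `M₀ ⊗ N₀` for countable submodules
`M₀ ≤ M`, `N₀ ≤ N`. These are free, so `M₀ ⊗ N₀` is free. As `N` is torsion-free, hence flat,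
and `M₀` is free, the map `M₀ ⊗ N₀ → M ⊗ N` is injective, so `P` is isomorphic to a submodule
of a free module over the PID `ℤ`, hence free.

That submodules of free modules over a PID are free is seen by well-ordering a basis: for a
submodule `Q` of `ι →₀ R`, pick for every `i` an element of `Q` supported on `Iic i` whose
`i`-th coordinate generates the ideal of all such coordinates. Those with nonzero diagonal entry
form a triangular, hence linearly independent, family, and they span `Q` by well-founded
induction on the largest index of the support.
-/

open Finsupp Set Submodule

namespace Finsupp

variable {ι : Type*} [LinearOrder ι]

section Module

variable {R M : Type*} [Semiring R] [AddCommMonoid M] [Module R M]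

theorem exists_mem_support_mem_supported_Iic {f : ι →₀ M} (hf : f ≠ 0) :
    ∃ i ∈ f.support, f ∈ supported M R (Iic i) := by
  obtain ⟨i, hi, hmax⟩ := f.support.exists_max_image id (support_nonempty_iff.2 hf)
  exact ⟨i, hi, hmax⟩

theorem mem_supported_Iio_of_mem_supported_Iic {f : ι →₀ M} {i : ι}
    (hf : f ∈ supported M R (Iic i)) (hfi : f i = 0) : f ∈ supported M R (Iio i) :=
  fun _ hj => (hf hj).lt_of_ne fun hji => mem_support_iff.1 hj (hji ▸ hfi)

end Module

theorem linearIndepOn_of_mem_supported_Iic {R : Type*} [Ring R] [NoZeroDivisors R]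
    {v : ι → ι →₀ R} {s : Set ι}
    (hv : ∀ i ∈ s, v i ∈ supported R R (Iic i)) (hdiag : ∀ i ∈ s, v i i ≠ 0) :
    LinearIndepOn R v s := by
  rw [linearIndepOn_iff]
  intro l hl hcomb
  by_contra hne
  obtain ⟨i, hi, hli⟩ := exists_mem_support_mem_supported_Iic (R := R) hne
  have hvanish : ∀ j ∈ l.support, j ≠ i → l j * v j i = 0 := fun j hj hji => by
    have hvji : v j i = 0 := notMem_support_iff.1 fun h =>
      ((hli hj).not_gt ((hv j (hl hj) h).lt_of_ne' hji)).elim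
    rw [hvji, mul_zero]
  have : l i * v i i = 0 := by
    simpa [linearCombination_apply, Finsupp.sum, Finset.sum_eq_single i hvanish, hi]
      using congrArg (· i) hcomb
  exact mul_ne_zero (mem_support_iff.1 hi) (hdiag i (hl hi)) this

end Finsupp

namespace Submodule

variable {R : Type*} [CommRing R] [IsPrincipalIdealRing R]
  {ι : Type*} [LinearOrder ι] (Q : Submodule R (ι →₀ R))

noncomputable def leadingIdeal (i : ι) : Ideal R :=
  (Q ⊓ supported R R (Iic i)).map (lapply i)

theorem generator_leadingIdeal_dvd {q : ι →₀ R} {i : ι} (hq : q ∈ Q)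
    (hqi : q ∈ supported R R (Iic i)) : IsPrincipal.generator (Q.leadingIdeal i) ∣ q i :=
  (IsPrincipal.mem_iff_generator_dvd _).1 ⟨q, ⟨hq, hqi⟩, rfl⟩

theorem exists_mem_apply_eq_generator_leadingIdeal (i : ι) :
    ∃ x ∈ Q, x ∈ supported R R (Iic i) ∧ x i = IsPrincipal.generator (Q.leadingIdeal i) := by
  obtain ⟨x, ⟨hxQ, hxi⟩, hx⟩ := IsPrincipal.generator_mem (Q.leadingIdeal i)
  exact ⟨x, hxQ, hxi, hx⟩

variable {Q}

theorem le_span_image_of_apply_eq_generator [WellFoundedLT ι] {x : ι → ι →₀ R}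
    (hxQ : ∀ i, x i ∈ Q) (hx : ∀ i, x i ∈ supported R R (Iic i))
    (hxi : ∀ i, x i i = IsPrincipal.generator (Q.leadingIdeal i)) :
    Q ≤ span R (x '' {i | IsPrincipal.generator (Q.leadingIdeal i) ≠ 0}) := by
  set S := {i | IsPrincipal.generator (Q.leadingIdeal i) ≠ 0}
  suffices h : ∀ i, ∀ q ∈ Q, q ∈ supported R R (Iic i) → q ∈ span R (x '' S) by
    intro q hq
    obtain rfl | hne := eq_or_ne q 0
    · exact zero_mem _
    obtain ⟨i, -, hqi⟩ := exists_mem_support_mem_supported_Iic (R := R) hne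
    exact h i q hq hqi
  intro i
  induction i using WellFoundedLT.induction with | _ i ih => ?_
  intro q hq hqi
  obtain ⟨c, hc, hcx⟩ : ∃ c : R, q i = c * x i i ∧ c • x i ∈ span R (x '' S) := by
    obtain ⟨c, hc⟩ := generator_leadingIdeal_dvd Q hq hqi
    by_cases ha : IsPrincipal.generator (Q.leadingIdeal i) = 0
    · exact ⟨0, by simp [hc, ha], by simp⟩
    · exact ⟨c, by rw [hc, hxi, mul_comm], smul_mem _ _ (subset_span ⟨i, ha, rfl⟩)⟩
  set r := q - c • x i
  have hrQ : r ∈ Q := sub_mem hq (smul_mem _ c (hxQ i))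
  have hr : r ∈ supported R R (Iio i) :=
    mem_supported_Iio_of_mem_supported_Iic (sub_mem hqi (smul_mem _ c (hx i)))
      (by simp [r, hc])
  have hrspan : r ∈ span R (x '' S) := by
    obtain h0 | hne := eq_or_ne r 0
    · rw [h0]; exact zero_mem _
    obtain ⟨j, hj, hrj⟩ := exists_mem_support_mem_supported_Iic (R := R) hne
    exact ih j (hr hj) r hrQ hrj
  simpa [r] using add_mem hrspan hcx

variable [IsDomain R]

theorem free_of_finsupp [WellFoundedLT ι] : Module.Free R Q := by
  choose x hxQ hx hxi using Q.exists_mem_apply_eq_generator_leadingIdeal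
  set S := {i | IsPrincipal.generator (Q.leadingIdeal i) ≠ 0}
  have hli : LinearIndepOn R x S :=
    linearIndepOn_of_mem_supported_Iic (fun i _ => hx i) fun i hi => by rwa [hxi]
  have hspan : span R (x '' S) = Q :=
    le_antisymm (span_le.2 (image_subset_iff.2 fun i _ => hxQ i))
      (le_span_image_of_apply_eq_generator hxQ hx hxi)
  have : Module.Free R (span R (range fun i : S => x i)) := .of_basis (Module.Basis.span hli)
  rwa [← image_eq_range, hspan] at this

theorem free_of_free {F : Type*} [AddCommMonoid F] [Module R F] [Module.Free R F]
    (P : Submodule R F) : Module.Free R P := by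
  let b := Module.Free.chooseBasis R F
  obtain ⟨_, _⟩ := exists_wellFoundedLT (Module.Free.ChooseBasisIndex R F)
  have := free_of_finsupp (Q := P.map b.repr.toLinearMap)
  exact .of_equiv (P.equivMapOfInjective _ b.repr.injective).symm

theorem free_of_le_range {F M : Type*} [AddCommMonoid F] [Module R F] [Module.Free R F]
    [AddCommMonoid M] [Module R M] {f : F →ₗ[R] M} (hf : Function.Injective f)
    {P : Submodule R M} (hP : P ≤ LinearMap.range f) : Module.Free R P := by
  have := (P.comap f).free_of_free
  exact .of_equiv ((P.comap f).equivMapOfInjective f hf ≪≫ₗ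
    LinearEquiv.ofEq _ _ (map_comap_eq_self hP))

end Submodule

theorem Submodule.countable_iSup {R M ι : Type*} [Semiring R] [Countable R] [AddCommMonoid M]
    [Module R M] [Countable ι] (p : ι → Submodule R M) (hp : ∀ i, Countable (p i)) :
    Countable ↥(⨆ i, p i) := by
  have : Countable (⋃ i, (p i : Set M)) := countable_iUnion fun i => (hp i).to_set
  rw [iSup_eq_span, ← Subtype.range_coe (s := ⋃ i, (p i : Set M))]
  infer_instance

theorem TensorProduct.exists_countable_submodule_of_setCountable {R M N : Type*} [CommRing R]
    [Countable R] [AddCommMonoid M] [Module R M] [AddCommMonoid N] [Module R N]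
    (s : Set (M ⊗[R] N)) (hs : s.Countable) :
    ∃ (M' : Submodule R M) (N' : Submodule R N), Countable M' ∧ Countable N' ∧
      s ⊆ LinearMap.range (mapIncl M' N') := by
  choose M' N' hM' hN' hz using fun z : s =>
    exists_finite_submodule_of_setFinite {(z : M ⊗[R] N)} (finite_singleton _)
  have := hs.to_subtype
  refine ⟨⨆ z, M' z, ⨆ z, N' z,
    countable_iSup _ fun _ => Finsupp.Countable.of_moduleFinite (R := R),
    countable_iSup _ fun _ => Finsupp.Countable.of_moduleFinite (R := R), fun z hzs => ?_⟩
  exact range_mapIncl_mono (le_iSup M' ⟨z, hzs⟩) (le_iSup N' ⟨z, hzs⟩) (hz ⟨z, hzs⟩ rfl)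

theorem Module.IsTorsionFree.of_free_span_singleton {R M : Type*} [CommRing R] [IsDomain R]
    [AddCommGroup M] [Module R M] (h : ∀ m : M, Module.Free R (span R {m})) :
    Module.IsTorsionFree R M := by
  refine .of_smul_eq_zero fun r m hrm => ?_
  have := h m
  have : r • (⟨m, mem_span_singleton_self m⟩ : span R {m}) = 0 := by ext; exact hrm
  simpa using smul_eq_zero.1 this

theorem TensorProduct.free_of_countable {R M N : Type*} [CommRing R] [IsDomain R]
    [IsPrincipalIdealRing R] [Countable R] [AddCommGroup M] [Module R M] [AddCommGroup N]
    [Module R N] (hM : ∀ P : Submodule R M, Countable P → Module.Free R P)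
    (hN : ∀ P : Submodule R N, Countable P → Module.Free R P)
    (P : Submodule R (M ⊗[R] N)) (hP : Countable P) : Module.Free R P := by
  obtain ⟨M₀, N₀, hM₀, hN₀, hPle⟩ :=
    exists_countable_submodule_of_setCountable (P : Set (M ⊗[R] N)) (countable_coe_iff.1 hP)
  have := hM M₀ hM₀
  have := hN N₀ hN₀
  have : Module.IsTorsionFree R N :=
    .of_free_span_singleton fun n => hN _ (Finsupp.Countable.of_moduleFinite (R := R))
  exact free_of_le_range (Module.Flat.tensorProduct_mapIncl_injective_of_left M₀ N₀) hPle

/-- Instance search gives a submodule `P` of a `ℤ`-module the structure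
`AddCommGroup.toIntModule P` in `NearlyFree`, but `Submodule.module P` in the lemmas above. -/
theorem Module.Free.int_congr {M : Type*} [AddCommMonoid M] {i₁ i₂ : Module ℤ M}
    (h : @Module.Free ℤ M _ _ i₁) : @Module.Free ℤ M _ _ i₂ :=
  Subsingleton.elim i₁ i₂ ▸ h

/-- If `M` and `N` are nearly free ℤ-modules, then `M ⊗_ℤ N` is nearly free. -/
theorem nearlyFree_tensor (M N : Type*) [AddCommGroup M] [Module ℤ M]
    [AddCommGroup N] [Module ℤ N]
    (hM : NearlyFree M) (hN : NearlyFree N) : NearlyFree (M ⊗[ℤ] N) := by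
  rw [Subsingleton.elim (AddCommGroup.toIntModule (M ⊗[ℤ] N)) TensorProduct.instModule]
  exact fun P hP => (TensorProduct.free_of_countable (fun P hP => (hM P hP).int_congr)
    (fun P hP => (hN P hP).int_congr) P hP).int_congr
end

section
/- If {N_k} is a countable collection of nearly free ℤ-modules, then the product ∏_{k=1}^∞ N_k is nearly free. -/
open Submodule Module

section Chain

variable {R M : Type*} [Ring R] [AddCommGroup M] [Module R M]

theorem Submodule.isTorsionFree_quotient_of_smul_mem [IsDomain R] {S : Submodule R M}
    (hS : ∀ (c : R) (x : M), c ≠ 0 → c • x ∈ S → x ∈ S) : IsTorsionFree R (M ⧸ S) := by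
  refine .of_smul_eq_zero fun c y hcy => or_iff_not_imp_left.mpr fun hc => ?_
  induction y using Submodule.Quotient.induction_on with
  | H x =>
    rw [← Submodule.Quotient.mk_smul] at hcy
    rw [Submodule.Quotient.mk_eq_zero] at hcy ⊢
    exact hS c x hc hcy

variable [Nontrivial R]

theorem Submodule.exists_linearIndepOn_mkQ_of_free (S S' : Submodule R M)
    [Module.Free R (S'.map S.mkQ)] :
    ∃ t ⊆ (S' : Set M), LinearIndepOn R S.mkQ t ∧ S' ≤ S ⊔ span R t := by
  set D := S'.map S.mkQ
  set b := Module.Free.chooseBasis R D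
  choose c hcS' hc using fun i => Submodule.mem_map.mp (b i).2
  have hcb : S.mkQ ∘ c = D.subtype ∘ b := funext hc
  have hli : LinearIndependent R (S.mkQ ∘ c) :=
    hcb ▸ b.linearIndependent.map' _ D.ker_subtype
  refine ⟨Set.range c, Set.range_subset_iff.mpr hcS',
    (linearIndepOn_range_iff hli.injective.of_comp _).mpr hli, fun x hx => ?_⟩
  rw [← comap_map_mkQ, mem_comap, map_span, ← Set.range_comp, hcb, Set.range_comp,
    ← map_span, b.span_eq, map_subtype_top]
  exact mem_map_of_mem hx

theorem Module.Free.of_monotone_of_free_map_mkQ (S : ℕ → Submodule R M) (hS : Monotone S)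
    (h0 : S 0 = ⊥) (htop : ⨆ n, S n = ⊤)
    (hfree : ∀ n, Module.Free R ((S (n + 1)).map (S n).mkQ)) : Module.Free R M := by
  choose t htS hti hspan using fun n => exists_linearIndepOn_mkQ_of_free (S n) (S (n + 1))
  have hbasis : ∀ n, LinearIndepOn R id (⋃ k < n, t k) ∧ span R (⋃ k < n, t k) = S n := by
    intro n
    induction n with
    | zero => simp [h0]
    | succ n ih =>
      rw [Set.biUnion_lt_succ, span_union, ih.2]
      refine ⟨ih.1.union_id_of_quotient (ih.2 ▸ subset_span) (hti n), ?_⟩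
      exact le_antisymm (sup_le (hS n.le_succ) (span_le.mpr (htS n))) (hspan n)
  have hmono : Monotone fun n => ⋃ k < n, t k := fun m n hmn =>
    Set.biUnion_subset_biUnion_left fun k hk => lt_of_lt_of_le hk hmn
  have hli : LinearIndepOn R id (⋃ n, ⋃ k < n, t k) :=
    linearIndepOn_iUnion_of_directed hmono.directed_le fun n => (hbasis n).1
  refine Module.Free.of_basis (Module.Basis.mk hli ?_)
  simp only [id_eq, Subtype.range_coe, span_iUnion, (hbasis _).2, htop, le_refl]

end Chain

theorem Submodule.exists_finset_eq_zero_of_apply_eq_zero {K J : Type*} [Field K]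
    (V : Submodule K (J → K)) [FiniteDimensional K V] :
    ∃ F : Finset J, ∀ v ∈ V, (∀ j ∈ F, v j = 0) → v = 0 := by
  classical
  let κ : Finset J → Submodule K V := fun F =>
    ⨅ j ∈ F, LinearMap.ker ((LinearMap.proj j).comp V.subtype)
  have mem_κ : ∀ F (v : V), v ∈ κ F ↔ ∀ j ∈ F, (v : J → K) j = 0 := by simp [κ, mem_iInf]
  obtain ⟨_, ⟨F₀, rfl⟩, hmin⟩ := wellFounded_lt.has_min (Set.range κ) ⟨_, ∅, rfl⟩
  refine ⟨F₀, fun v hv hvF₀ => funext fun j => ?_⟩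
  have hle : κ (insert j F₀) ≤ κ F₀ := fun w hw =>
    (mem_κ _ w).mpr fun i hi => (mem_κ _ w).mp hw i (Finset.mem_insert_of_mem hi)
  have heq : κ (insert j F₀) = κ F₀ := eq_of_le_of_not_lt hle (hmin _ ⟨_, rfl⟩)
  have hv : ⟨v, hv⟩ ∈ κ (insert j F₀) := heq ▸ (mem_κ F₀ ⟨v, hv⟩).mpr hvF₀
  exact (mem_κ _ _).mp hv j (Finset.mem_insert_self j F₀)

section Specker

variable {M J : Type*} [AddCommGroup M]

theorem fg_comap_restrictScalars_of_injective {f : M →ₗ[ℤ] (J → ℤ)}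
    (hf : Function.Injective f) (V : Submodule ℚ (J → ℚ)) [FiniteDimensional ℚ V] :
    ((V.restrictScalars ℤ).comap ((Algebra.linearMap ℤ ℚ).compLeft J ∘ₗ f)).FG := by
  obtain ⟨F, hF⟩ := V.exists_finset_eq_zero_of_apply_eq_zero
  set S := (V.restrictScalars ℤ).comap ((Algebra.linearMap ℤ ℚ).compLeft J ∘ₗ f)
  let g := LinearMap.funLeft ℤ ℤ ((↑) : F → J) ∘ₗ f ∘ₗ S.subtype
  have hg : Function.Injective g := by
    refine (injective_iff_map_eq_zero g).mpr fun x hx => Subtype.ext (hf ?_)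
    have hψx := hF _ x.2 fun j hj => by simpa [g] using congrFun hx ⟨j, hj⟩
    exact funext fun j => by simpa using congrFun hψx j
  have : IsNoetherian ℤ S := isNoetherian_of_injective g hg
  exact Module.Finite.iff_fg.mp inferInstance

theorem Module.Free.of_countable_of_injective_pi [Countable M] {f : M →ₗ[ℤ] (J → ℤ)}
    (hf : Function.Injective f) : Module.Free ℤ M := by
  obtain ⟨a, ha⟩ := exists_surjective_nat M
  set ψ := (Algebra.linearMap ℤ ℚ).compLeft J ∘ₗ f
  have hcast : Function.Injective ((Algebra.linearMap ℤ ℚ).compLeft J) := fun u v huv =>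
    funext fun j => Int.cast_injective (congrFun huv j)
  have hψ : Function.Injective ψ := hcast.comp hf
  let V n := span ℚ (ψ ∘ a '' Set.Iio n)
  have (n : ℕ) : FiniteDimensional ℚ (V n) :=
    FiniteDimensional.span_of_finite ℚ ((Set.finite_Iio n).image _)
  let S n := (V n).restrictScalars ℤ |>.comap ψ
  have hS : Monotone S := fun m n hmn =>
    comap_mono (span_mono (Set.image_mono (Set.Iio_subset_Iio hmn)))
  refine of_monotone_of_free_map_mkQ S hS ?_ ?_ fun n => ?_
  · simpa [S, V] using LinearMap.ker_eq_bot.mpr hψ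
  · refine eq_top_iff.mpr fun x _ => ?_
    obtain ⟨k, rfl⟩ := ha x
    exact mem_iSup_of_mem (k + 1) (subset_span ⟨k, Nat.lt_succ_self k, rfl⟩)
  · have : IsTorsionFree ℤ (M ⧸ S n) := isTorsionFree_quotient_of_smul_mem fun c x hc hcx => by
      have : ψ (c • x) ∈ V n := hcx
      rw [map_smul, ← Int.cast_smul_eq_zsmul ℚ] at this
      exact (V n).smul_mem_iff (by exact_mod_cast hc) |>.mp this
    have : Module.Finite ℤ (S (n + 1)) :=
      Module.Finite.iff_fg.mpr (fg_comap_restrictScalars_of_injective hf _)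
    infer_instance

end Specker

theorem exists_injective_sigma_pi_of_free {R ι : Type*} [Semiring R] (Q : ι → Type*)
    [∀ i, AddCommMonoid (Q i)] [∀ i, Module R (Q i)] [∀ i, Module.Free R (Q i)] :
    ∃ f : (∀ i, Q i) →ₗ[R] ((Σ i, Module.Free.ChooseBasisIndex R (Q i)) → R),
      Function.Injective f := by
  let b i := Module.Free.chooseBasis R (Q i)
  refine ⟨(LinearEquiv.piCurry R fun _ _ => R).symm.toLinearMap ∘ₗ
      LinearMap.pi fun i => Finsupp.lcoeFun ∘ₗ (b i).repr.toLinearMap ∘ₗ LinearMap.proj i, ?_⟩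
  rw [LinearMap.coe_comp]
  refine (LinearEquiv.injective _).comp fun x y hxy => funext fun i => ?_
  exact (b i).repr.injective (DFunLike.coe_injective (congrFun hxy i))

/-- If `{N k}` is a countable collection of nearly free ℤ-modules, then the
product `∏ k, N k` is nearly free. -/
theorem nearlyFree_pi (N : ℕ → Type*) [∀ k, AddCommGroup (N k)]
    [∀ k, Module ℤ (N k)] (hN : ∀ k, NearlyFree (N k)) :
    NearlyFree (∀ k, N k) := by
  -- The conclusion uses the canonical `ℤ`-module structure on the product, so switch the
  -- factors to theirs as well (a `ℤ`-module structure is unique).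
  obtain rfl : ‹∀ k, Module ℤ (N k)› = fun k => AddCommGroup.toIntModule (N k) :=
    funext fun k => Subsingleton.elim _ _
  intro P hP
  let π k := (Pi.evalAddMonoidHom N k).toIntLinearMap
  have (k : ℕ) : Module.Free ℤ (P.map (π k)) :=
    hN k _ (LinearMap.submoduleMap_surjective _ _).countable
  obtain ⟨g, hg⟩ := exists_injective_sigma_pi_of_free (R := ℤ) fun k => P.map (π k)
  refine .of_countable_of_injective_pi
    (f := g ∘ₗ LinearMap.pi fun k => (π k).submoduleMap P) (hg.comp ?_)
  exact fun x y hxy => Subtype.ext (funext fun k => congrArg Subtype.val (congrFun hxy k))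
end

section
/- If A is a nearly free ℤ-module and F is a free ℤ-module of countable rank, then Hom_ℤ(F, A) is nearly free. -/
open Submodule Module Set

namespace Submodule

variable {R M : Type*} [CommRing R] [IsDomain R] [AddCommGroup M] [Module R M]

def pureClosure (S : Submodule R M) : Submodule R M :=
  (torsion R (M ⧸ S)).comap S.mkQ

theorem mem_pureClosure {S : Submodule R M} {x : M} :
    x ∈ S.pureClosure ↔ ∃ r : R, r ≠ 0 ∧ r • x ∈ S := by
  simp [pureClosure, ← Quotient.mk_smul, Quotient.mk_eq_zero, mem_nonZeroDivisors_iff_ne_zero]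

theorem le_pureClosure (S : Submodule R M) : S ≤ S.pureClosure := fun _ hx =>
  mem_pureClosure.2 ⟨1, one_ne_zero, by simpa⟩

theorem pureClosure_mono : Monotone (pureClosure : Submodule R M → Submodule R M) :=
  fun _ _ hST _ hx => by
    obtain ⟨r, hr, hrx⟩ := mem_pureClosure.1 hx
    exact mem_pureClosure.2 ⟨r, hr, hST hrx⟩

theorem pureClosure_bot [IsTorsionFree R M] : (⊥ : Submodule R M).pureClosure = ⊥ := by
  ext x
  simp only [mem_pureClosure, mem_bot, smul_eq_zero]
  exact ⟨fun ⟨_, hr, h⟩ => h.resolve_left hr, fun h => ⟨1, one_ne_zero, .inr h⟩⟩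

theorem mem_pureClosure_of_smul_mem {S : Submodule R M} {r : R} (hr : r ≠ 0) {x : M}
    (h : r • x ∈ S.pureClosure) : x ∈ S.pureClosure := by
  obtain ⟨s, hs, hsx⟩ := mem_pureClosure.1 h
  exact mem_pureClosure.2 ⟨s * r, mul_ne_zero hs hr, by rwa [mul_smul]⟩

instance isTorsionFree_quotient_comap_pureClosure (S H : Submodule R M) :
    IsTorsionFree R (H ⧸ S.pureClosure.comap H.subtype) := by
  refine .of_smul_eq_zero fun r y h => ?_
  obtain ⟨x, rfl⟩ := Quotient.mk_surjective _ y
  rw [← Quotient.mk_smul, Quotient.mk_eq_zero] at h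
  rw [Quotient.mk_eq_zero]
  exact or_iff_not_imp_left.2 fun hr => mem_pureClosure_of_smul_mem hr h

end Submodule

section Chain

variable {R M : Type*} [Ring R] [Nontrivial R] [AddCommGroup M] [Module R M]

theorem Submodule.exists_linearIndepOn_sup_eq {G H : Submodule R M} (hGH : G ≤ H)
    [Module.Free R (H ⧸ G.comap H.subtype)] :
    ∃ C : Set M, LinearIndepOn R id C ∧ Disjoint G (span R C) ∧ G ⊔ span R C = H := by
  set G' := G.comap H.subtype
  -- free modules are projective, so `H → H ⧸ G'` has a section; its range is a complement of `G`
  obtain ⟨s, hs⟩ := projective_lifting_property G'.mkQ LinearMap.id G'.mkQ_surjective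
  have hs' (y : H ⧸ G') : G'.mkQ (s y) = y := LinearMap.congr_fun hs y
  set f := H.subtype ∘ₗ s
  have hf : Function.Injective f :=
    H.injective_subtype.comp (Function.LeftInverse.injective hs')
  set q := Module.Free.chooseBasis R (H ⧸ G')
  have hfq : LinearIndependent R (f ∘ q) := q.linearIndependent.map' f (LinearMap.ker_eq_bot.2 hf)
  refine ⟨range (f ∘ q), (linearIndepOn_id_range_iff hfq.injective).2 hfq, ?_, ?_⟩
  · rw [range_comp, span_image, q.span_eq, map_top, disjoint_def]
    rintro _ hG ⟨y, rfl⟩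
    have : y = 0 := by
      rw [← hs' y, mkQ_apply, Quotient.mk_eq_zero]
      exact hG
    simp [this]
  · rw [range_comp, span_image, q.span_eq, map_top]
    refine le_antisymm (sup_le hGH ?_) fun x hx => ?_
    · rintro _ ⟨y, rfl⟩
      exact (s y).2
    · have hrest : (⟨x, hx⟩ - s (G'.mkQ ⟨x, hx⟩) : H) ∈ G' := by
        rw [← Quotient.mk_eq_zero, ← mkQ_apply, map_sub, hs', sub_self]
      rw [← sub_add_cancel x (f _)]
      exact add_mem (mem_sup_left hrest) (mem_sup_right (LinearMap.mem_range_self f _))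

theorem Module.free_of_chain_of_free_quotients {G : ℕ → Submodule R M} (hG0 : G 0 = ⊥)
    (hG : Monotone G) (htop : ⨆ n, G n = ⊤)
    (hfree : ∀ n, Module.Free R (G (n + 1) ⧸ (G n).comap (G (n + 1)).subtype)) :
    Module.Free R M := by
  choose C hCind hCdisj hCsup using fun n => exists_linearIndepOn_sup_eq (hG (Nat.le_succ n))
  set B : ℕ → Set M := fun n => ⋃ k < n, C k
  have hB (n : ℕ) : LinearIndepOn R id (B n) ∧ span R (B n) = G n := by
    induction n with
    | zero => simp [B, hG0]
    | succ n ih =>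
      simp only [B, biUnion_lt_succ, span_union] at ih ⊢
      refine ⟨ih.1.union (hCind n) ?_, by rw [ih.2, hCsup]⟩
      rw [image_id, image_id, ih.2]
      exact hCdisj n
  have hBmono : Monotone B := fun _ _ hmn =>
    biUnion_mono (fun _ hk => lt_of_lt_of_le hk hmn) fun _ _ => subset_rfl
  have hind : LinearIndepOn R id (⋃ n, B n) :=
    linearIndepOn_iUnion_of_directed hBmono.directed_le fun n => (hB n).1
  have hspan : span R (⋃ n, B n) = ⊤ := by
    simp only [span_iUnion, fun n => (hB n).2, htop]
  exact Module.Free.of_basis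
    (Basis.mk hind (by rw [← hspan]; exact span_mono fun x hx => ⟨⟨x, hx⟩, rfl⟩))

end Chain

section PID

variable {R : Type*} [CommRing R] [IsDomain R] [IsPrincipalIdealRing R]

theorem Module.free_of_countable_of_fg_pureClosure {M : Type*} [AddCommGroup M] [Module R M]
    [Countable M] [IsTorsionFree R M] (h : ∀ S : Submodule R M, S.FG → S.pureClosure.FG) :
    Module.Free R M := by
  obtain ⟨e, he⟩ := exists_surjective_nat M
  set G : ℕ → Submodule R M := fun n => (span R (e '' Iio n)).pureClosure
  have hfg (n : ℕ) : Module.Finite R (G n) :=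
    Module.Finite.iff_fg.2 (h _ (fg_span ((finite_Iio n).image e)))
  refine Module.free_of_chain_of_free_quotients (G := G) ?_ ?_ ?_ fun n => ?_
  · simp [G, pureClosure_bot]
  · exact fun m n hmn => pureClosure_mono (span_mono (image_mono (Iio_subset_Iio hmn)))
  · refine eq_top_iff.2 fun x _ => ?_
    obtain ⟨k, rfl⟩ := he x
    exact mem_iSup_of_mem (k + 1) (le_pureClosure _ (subset_span ⟨k, Nat.lt_succ_self k, rfl⟩))
  · have := hfg (n + 1)
    exact Module.free_of_finite_type_torsion_free'

variable {σ : Type*}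

theorem Submodule.FG.exists_finset_eq_zero_of_apply_eq_zero {V : Submodule R (σ → R)}
    (hV : V.FG) : ∃ J : Finset σ, ∀ x ∈ V, (∀ j ∈ J, x j = 0) → x = 0 := by
  classical
  have : Module.Finite R V := Module.Finite.iff_fg.2 hV
  set ev : σ → (V →ₗ[R] R) := fun j => LinearMap.proj j ∘ₗ V.subtype
  obtain ⟨_, ⟨J, rfl⟩, hJmax⟩ := set_has_maximal_iff_noetherian.2 inferInstance
    (range fun J : Finset σ => span R (ev '' J)) (range_nonempty _)
  have hev (j : σ) : ev j ∈ span R (ev '' J) := by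
    by_contra hj
    refine hJmax _ ⟨insert j J, rfl⟩ (lt_of_le_of_ne ?_ fun h => hj ?_)
    · exact span_mono (image_mono (by simp))
    · rw [show span R (ev '' J) = span R (ev '' ↑(insert j J)) from h]
      exact subset_span ⟨j, by simp, rfl⟩
  refine ⟨J, fun x hx hJ => funext fun j => ?_⟩
  have hker : span R (ev '' J) ≤ LinearMap.ker (LinearMap.applyₗ (R := R) ⟨x, hx⟩) := by
    rw [span_le]
    rintro _ ⟨j, hj, rfl⟩
    exact hJ j hj
  exact hker (hev j)

theorem Module.free_of_countable_of_injective_pi {M : Type*} [AddCommGroup M] [Module R M]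
    [Countable M] (g : M →ₗ[R] (σ → R)) (hg : Function.Injective g) : Module.Free R M := by
  have : IsTorsionFree R M := hg.moduleIsTorsionFree g (map_smul g)
  refine Module.free_of_countable_of_fg_pureClosure fun S hS => ?_
  obtain ⟨J, hJ⟩ := (hS.map g).exists_finset_eq_zero_of_apply_eq_zero
  set f : S.pureClosure →ₗ[R] (J → R) :=
    (LinearMap.pi fun j : J => LinearMap.proj j.1) ∘ₗ g ∘ₗ S.pureClosure.subtype
  have hf : Function.Injective f := by
    refine (injective_iff_map_eq_zero f).2 fun x hx => ?_
    obtain ⟨r, hr, hrx⟩ := mem_pureClosure.1 x.2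
    have : g (r • x) = 0 := hJ _ (mem_map_of_mem hrx) fun j hj => by
      simp [show g x j = 0 by simpa [f] using congr_fun hx ⟨j, hj⟩]
    exact Subtype.ext (hg (by simpa [hr] using this))
  exact Module.Finite.iff_fg.1 (Module.Finite.of_injective f hf)

end PID

section NearlyFree

variable {M N : Type*} [AddCommGroup M] [AddCommGroup N]

theorem NearlyFree.free_of_injective (hN : NearlyFree N) [Countable M] (f : M →+ N)
    (hf : Function.Injective f) : Module.Free ℤ M := by
  set e := LinearEquiv.ofInjective f.toIntLinearMap hf
  have : Countable (LinearMap.range f.toIntLinearMap) := e.symm.injective.countable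
  -- `NearlyFree` is phrased with the canonical ℤ-module structure on submodules, so the
  -- equivalence is rebuilt from its underlying additive equivalence
  exact .of_equiv' (hN _ this) e.toAddEquiv.toIntLinearEquiv.symm

theorem NearlyFree.of_injective (hN : NearlyFree N) (f : M →+ N) (hf : Function.Injective f) :
    NearlyFree M := fun P _ =>
  hN.free_of_injective (f.comp P.subtype.toAddMonoidHom) (hf.comp Subtype.val_injective)

theorem nearlyFree_pi_int (σ : Type*) : NearlyFree (σ → ℤ) := fun P _ =>
  Module.free_of_countable_of_injective_pi P.subtype.toAddMonoidHom.toIntLinearMap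
    Subtype.val_injective

theorem Module.Basis.nearlyFree_pi {κ : Type*} (c : Basis κ ℤ M) (ι : Type*) :
    NearlyFree (ι → M) := by
  set f : (ι → M) →ₗ[ℤ] (ι × κ → ℤ) := LinearMap.pi fun p => c.coord p.2 ∘ₗ LinearMap.proj p.1
  refine (nearlyFree_pi_int _).of_injective f.toAddMonoidHom
    ((injective_iff_map_eq_zero f).2 fun x hx => funext fun i => c.repr.map_eq_zero_iff.1 ?_)
  exact Finsupp.ext fun k => congr_fun hx (i, k)

theorem NearlyFree.pi {A : Type*} [AddCommGroup A] [Module ℤ A] (hA : NearlyFree A)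
    (ι : Type*) [Countable ι] : NearlyFree (ι → A) := by
  intro P _
  set A' : Submodule ℤ A := span ℤ (range fun p : P × ι => (p.1 : ι → A) p.2)
  have hmem (x : P) (i : ι) : (x : ι → A) i ∈ A' := subset_span ⟨(x, i), rfl⟩
  have : Module.Free ℤ A' := hA A' inferInstance
  set f : P →+ (ι → A') :=
    { toFun := fun x i => ⟨(x : ι → A) i, hmem x i⟩, map_zero' := rfl, map_add' := fun _ _ => rfl }
  refine ((Module.Free.chooseBasis ℤ A').nearlyFree_pi ι).free_of_injective f fun x y h => ?_
  exact Subtype.ext (funext fun i => congr_arg Subtype.val (congr_fun h i))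

end NearlyFree

/-- If `A` is a nearly free ℤ-module and `F` is a free ℤ-module of countable
rank, then `Hom_ℤ(F, A)` is nearly free. -/
theorem nearlyFree_hom (A F : Type*) [AddCommGroup A] [Module ℤ A]
    [AddCommGroup F] [Module ℤ F] (hA : NearlyFree A)
    (ι : Type*) [Countable ι] (b : Module.Basis ι ℤ F) :
    NearlyFree (F →ₗ[ℤ] A) :=
  -- `constr` over `ℕ`: over `ℤ` its scalar instances would clash with the given `Module ℤ A`
  let e : (F →ₗ[ℤ] A) ≃+ (ι → A) := (b.constr ℕ).symm.toAddEquiv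
  (hA.pi ι).of_injective e e.injective
end
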